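/- arXiv:2603.23316 — 2 statements merged into one kernel-verified Lean document; each statement's English description precedes it below -/
import Mathlib

section
/- Let X and Y be geometric data sets and π ∈ Π(μ_X, μ_Y) a coupling. Then there exists a map u : F̄_X → F̄_Y such that for every f ∈ F̄_X, d_KF^π(f ∘ pr₁, u(f) ∘ pr₂) ≤ d_conc^π(X,Y), where d_conc^π(X,Y) := H_{d_KF^π}(F_X ∘ pr₁, F_Y ∘ pr₂). In other words, for each f in the closure of F_X, the Hausdorff-distance bound is attained by some element of the closure of F_Y. -/
open MeasureTheory Topology Filter ENNReal

noncomputable section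

/-- The Ky Fan (extended) pseudometric between two maps, w.r.t. a measure `π`:
`inf {ε ≥ 0 | π {ω | d (u ω) (v ω) > ε} ≤ ε}`. -/
def kyFan {Ω E : Type*} [MeasurableSpace Ω] [PseudoEMetricSpace E]
    (π : Measure Ω) (u v : Ω → E) : ℝ≥0∞ :=
  sInf {ε : ℝ≥0∞ | π {ω | ε < edist (u ω) (v ω)} ≤ ε}

/-- Hausdorff distance between two sets w.r.t. an abstract extended pseudometric `d`. -/
def hausd {α : Type*} (d : α → α → ℝ≥0∞) (A B : Set α) : ℝ≥0∞ :=
  max (⨆ a : A, ⨅ b : B, d a b) (⨆ b : B, ⨅ a : A, d a b)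

/-- The sup (extended) pseudometric `d∞^A` over a subset `A`. -/
def dInfty {α β : Type*} [PseudoEMetricSpace β] (A : Set α) (u v : α → β) : ℝ≥0∞ :=
  ⨆ a : A, edist (u a) (v a)

/-- A geometric data set: a complete separable metric space whose distance is the
supremum of feature differences over a nonempty family `F` of real-valued functions,
equipped with a fully supported Borel probability measure. -/
structure GDS where
  carrier : Type
  met : MetricSpace carrier
  cms : CompleteSpace carrier
  sep : TopologicalSpace.SeparableSpace carrier
  msp : MeasurableSpace carrier
  bor : BorelSpace carrier
  F : Set (carrier → ℝ)
  F_nonempty : F.Nonempty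
  dist_isLUB : ∀ x y : carrier, IsLUB ((fun f => |f x - f y|) '' F) (dist x y)
  μ : Measure carrier
  prob : IsProbabilityMeasure μ
  full_support : ∀ U : Set carrier, IsOpen U → U.Nonempty → 0 < μ U

attribute [instance] GDS.met GDS.cms GDS.sep GDS.msp GDS.bor GDS.prob

/-- A coupling of the measures of two geometric data sets. -/
def GDS.Coupling (X Y : GDS) (π : Measure (X.carrier × Y.carrier)) : Prop :=
  IsProbabilityMeasure π ∧ π.map Prod.fst = X.μ ∧ π.map Prod.snd = Y.μ

/-- A parameter of a measure `μ`: a Borel measurable map from `[0,1]` (with Lebesgue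
measure) pushing the Lebesgue measure forward to `μ`. -/
def IsParam {X : Type*} [MeasurableSpace X] (μ : Measure X)
    (φ : Set.Icc (0:ℝ) 1 → X) : Prop :=
  Measurable φ ∧ Measure.map φ volume = μ

/-- The observable distance between two geometric data sets. -/
def dConc (X Y : GDS) : ℝ≥0∞ :=
  ⨅ (φ : Set.Icc (0:ℝ) 1 → X.carrier) (_ : IsParam X.μ φ)
    (ψ : Set.Icc (0:ℝ) 1 → Y.carrier) (_ : IsParam Y.μ ψ),
    hausd (kyFan (volume : Measure (Set.Icc (0:ℝ) 1)))
      ((· ∘ φ) '' X.F) ((· ∘ ψ) '' Y.F)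

/-- `d_conc^π`, the Hausdorff distance w.r.t. the Ky Fan metric of a coupling `π`. -/
def dConcCoupling (X Y : GDS) (π : Measure (X.carrier × Y.carrier)) : ℝ≥0∞ :=
  hausd (kyFan π) ((· ∘ Prod.fst) '' X.F) ((· ∘ Prod.snd) '' Y.F)

/-- The Prohorov distance between two Borel measures. -/
def prohorov {Z : Type*} [PseudoEMetricSpace Z] [MeasurableSpace Z]
    (μ ν : Measure Z) : ℝ≥0∞ :=
  sInf {ε : ℝ≥0∞ | ∀ A : Set Z, MeasurableSet A →
    ν A ≤ μ {z | EMetric.infEdist z A < ε} + ε}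

/-- The `a`-partial diameter of a Borel measure on `ℝ`. -/
def partialDiam (ν : Measure ℝ) (a : ℝ≥0∞) : ℝ≥0∞ :=
  ⨅ (I : Set ℝ) (_ : MeasurableSet I) (_ : a ≤ ν I), EMetric.diam I

/-- The `κ`-observable diameter `ObsDiam(X; -κ)` of a geometric data set. -/
def obsDiam (X : GDS) (κ : ℝ) : ℝ≥0∞ :=
  ⨆ f : X.F, partialDiam (X.μ.map f) (ENNReal.ofReal (1 - κ))

/-- The distortion of a subset `S ⊆ X × Y`. -/
def distortion {X Y : Type*} [PseudoMetricSpace X] [PseudoMetricSpace Y]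
    (S : Set (X × Y)) : ℝ≥0∞ :=
  ⨆ (p : S) (q : S), edist (dist p.1.1 q.1.1) (dist p.1.2 q.1.2)

/-- `□_π^S(F, G) = max {1 - π S, 2 H_{d∞^S}(F ∘ pr₁, G ∘ pr₂)}`. -/
def boxS (X Y : GDS) (π : Measure (X.carrier × Y.carrier))
    (S : Set (X.carrier × Y.carrier))
    (F : Set (X.carrier → ℝ)) (G : Set (Y.carrier → ℝ)) : ℝ≥0∞ :=
  max (1 - π S) (2 * hausd (dInfty S) ((· ∘ Prod.fst) '' F) ((· ∘ Prod.snd) '' G))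

/-- `□_π(F, G)`, infimum of `□_π^S(F, G)` over closed `S`. -/
def boxCoupling (X Y : GDS) (π : Measure (X.carrier × Y.carrier))
    (F : Set (X.carrier → ℝ)) (G : Set (Y.carrier → ℝ)) : ℝ≥0∞ :=
  ⨅ (S : Set (X.carrier × Y.carrier)) (_ : IsClosed S), boxS X Y π S F G

/-- The box distance between two geometric data sets. -/
def boxDist (X Y : GDS) : ℝ≥0∞ :=
  ⨅ (π : Measure (X.carrier × Y.carrier)) (_ : X.Coupling Y π),
    boxCoupling X Y π X.F Y.F

/-- The distortion `dis π` of a coupling `π`. -/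
def disCoupling (X Y : GDS) (π : Measure (X.carrier × Y.carrier)) : ℝ≥0∞ :=
  ⨅ (S : Set (X.carrier × Y.carrier)) (_ : IsClosed S), max (1 - π S) (distortion S)

/-- `X ⪯ Y` : the geometric data set `Y` dominates `X` (feature order). -/
def GDS.Dominates (Y X : GDS) : Prop :=
  ∃ p : Y.carrier → X.carrier, Measurable p ∧ Y.μ.map p = X.μ ∧
    (· ∘ p) '' X.F ⊆ closure Y.F

/-! Fix `f ∈ F̄_X`. For every `t > d_conc^π(X,Y)` some `g ∈ F_Y` has
`d_KF^π(f ∘ pr₁, g ∘ pr₂) < t`: approximate `f` in Ky Fan distance by `f' ∈ F_X` (pointwise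
closeness on a finite net of a compact set of almost full measure) and use the Hausdorff bound
for `f'`. If `d_conc^π < 1`, letting `t ↓ d_conc^π` produces 1-Lipschitz `gₙ ∈ F_Y` which the
Ky Fan bounds make pointwise bounded, so by Arzelà–Ascoli on a countable dense set a subsequence
converges pointwise to some `g ∈ F̄_Y`; the Ky Fan distance is lower semicontinuous under
pointwise convergence. If `d_conc^π ≥ 1`, any `g` works, as Ky Fan distances are at most `1`. -/

open Set Bornology

section KyFan

variable {Ω E : Type*} [MeasurableSpace Ω] [PseudoEMetricSpace E] (π : Measure Ω)

theorem kyFan_le_of_measure_le {u v : Ω → E} {t : ℝ≥0∞}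
    (h : π {ω | t < edist (u ω) (v ω)} ≤ t) : kyFan π u v ≤ t :=
  sInf_le h

theorem kyFan_le_one [IsProbabilityMeasure π] (u v : Ω → E) : kyFan π u v ≤ 1 :=
  kyFan_le_of_measure_le π prob_le_one

theorem measure_kyFan_lt_edist_le (u v : Ω → E) :
    π {ω | kyFan π u v < edist (u ω) (v ω)} ≤ kyFan π u v := by
  set k := kyFan π u v
  have above : ∀ t, k < t → π {ω | t < edist (u ω) (v ω)} ≤ t := by
    intro t ht
    obtain ⟨ε, hε, hεt⟩ := sInf_lt_iff.1 ht
    exact (measure_mono fun ω hω => hεt.trans hω).trans (hε.trans hεt.le)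
  rcases eq_or_ne k ⊤ with hk | hk
  · exact hk ▸ le_top
  obtain ⟨t, ht_anti, htk, ht⟩ := exists_seq_strictAnti_tendsto' (lt_top_iff_ne_top.2 hk)
  have hunion : {ω | k < edist (u ω) (v ω)} = ⋃ n, {ω | t n < edist (u ω) (v ω)} := by
    ext ω
    simp only [mem_ofPred_eq, mem_iUnion]
    exact ⟨fun h => (ht.eventually_lt_const h).exists, fun ⟨n, hn⟩ => (htk n).1.trans hn⟩
  rw [hunion]
  exact le_of_tendsto_of_tendsto'
    (tendsto_measure_iUnion_atTop fun m n hmn ω hω => (ht_anti.antitone hmn).trans_lt hω) ht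
    fun n => above (t n) (htk n).1

theorem measure_lt_edist_le_of_kyFan_le {u v : Ω → E} {t : ℝ≥0∞} (h : kyFan π u v ≤ t) :
    π {ω | t < edist (u ω) (v ω)} ≤ t :=
  (measure_mono fun _ hω => h.trans_lt hω).trans ((measure_kyFan_lt_edist_le π u v).trans h)

theorem exists_edist_le_of_kyFan_le {u v : Ω → E} {t : ℝ≥0∞} {s : Set Ω}
    (h : kyFan π u v ≤ t) (hs : t < π s) : ∃ ω ∈ s, edist (u ω) (v ω) ≤ t := by
  by_contra! hlt
  exact ((measure_mono hlt).trans (measure_lt_edist_le_of_kyFan_le π h)).not_gt hs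

theorem kyFan_triangle (u v w : Ω → E) : kyFan π u w ≤ kyFan π u v + kyFan π v w := by
  refine kyFan_le_of_measure_le π ?_
  have hsub : {ω | kyFan π u v + kyFan π v w < edist (u ω) (w ω)} ⊆
      {ω | kyFan π u v < edist (u ω) (v ω)} ∪ {ω | kyFan π v w < edist (v ω) (w ω)} := by
    intro ω hω
    by_contra hle
    simp only [mem_union, mem_ofPred_eq, not_or, not_lt] at hle
    exact hω.not_ge ((edist_triangle _ _ _).trans (add_le_add hle.1 hle.2))
  exact (measure_mono hsub).trans ((measure_union_le _ _).trans
    (add_le_add (measure_kyFan_lt_edist_le π u v) (measure_kyFan_lt_edist_le π v w)))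

theorem kyFan_comp_le_kyFan_map {X : Type*} [MeasurableSpace X] {p : Ω → X}
    (hp : AEMeasurable p π) (u v : X → E) :
    kyFan π (u ∘ p) (v ∘ p) ≤ kyFan (π.map p) u v :=
  kyFan_le_of_measure_le π ((Measure.le_map_apply hp _).trans (measure_kyFan_lt_edist_le _ u v))

theorem measure_liminf_atTop_le {α : Type*} [MeasurableSpace α] (μ : Measure α)
    (s : ℕ → Set α) : μ (liminf s atTop) ≤ liminf (fun n => μ (s n)) atTop := by
  rw [liminf_eq_iSup_iInf_of_nat, liminf_eq_iSup_iInf_of_nat]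
  have hmono : Monotone fun N => ⨅ n ≥ N, s n := fun N M h =>
    biInf_mono fun n hn => h.trans hn
  calc μ (⨆ N, ⨅ n ≥ N, s n) = ⨆ N, μ (⨅ n ≥ N, s n) := hmono.measure_iUnion
    _ ≤ ⨆ N, ⨅ n ≥ N, μ (s n) :=
        iSup_mono fun N => le_iInf₂ fun n hn => measure_mono (biInf_le s hn)

theorem kyFan_le_liminf_of_tendsto {u : Ω → E} {v : ℕ → Ω → E} {w : Ω → E}
    (hv : ∀ ω, Tendsto (fun n => v n ω) atTop (𝓝 (w ω))) :
    kyFan π u w ≤ liminf (fun n => kyFan π u (v n)) atTop := by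
  refine le_of_forall_gt_imp_ge_of_dense fun c hc => ?_
  obtain ⟨c', hc', hc'c⟩ := exists_between hc
  refine kyFan_le_of_measure_le π ?_
  have hsub : {ω | c < edist (u ω) (w ω)} ⊆
      liminf (fun n => {ω | c' < edist (u ω) (v n ω)}) atTop := fun ω hω =>
    mem_liminf_iff_eventually_mem.2
      ((tendsto_const_nhds.edist (hv ω)).eventually_const_lt (hc'c.trans hω))
  calc π {ω | c < edist (u ω) (w ω)}
      ≤ liminf (fun n => π {ω | c' < edist (u ω) (v n ω)}) atTop :=
        (measure_mono hsub).trans (measure_liminf_atTop_le π _)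
    _ ≤ c' := liminf_le_of_frequently_le' ((frequently_lt_of_liminf_lt (h := hc')).mono
        fun n hn => measure_lt_edist_le_of_kyFan_le π hn.le)
    _ ≤ c := hc'c.le

end KyFan

theorem iInf_le_hausd {α : Type*} (d : α → α → ℝ≥0∞) {A : Set α} (B : Set α) {a : α}
    (ha : a ∈ A) : ⨅ b ∈ B, d a b ≤ hausd d A B := by
  rw [iInf_subtype']
  exact (le_iSup (fun a : A => ⨅ b : B, d a b) ⟨a, ha⟩).trans (le_max_left _ _)

theorem LipschitzWith.of_mem_closure {X Y : Type*} [PseudoEMetricSpace X] [PseudoEMetricSpace Y]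
    {K : NNReal} {F : Set (X → Y)} (hF : ∀ f ∈ F, LipschitzWith K f) {f : X → Y}
    (hf : f ∈ closure F) : LipschitzWith K f :=
  closure_minimal hF (isClosed_setOfPred_lipschitzWith K) hf

theorem exists_kyFan_le_of_mem_closure {X : Type*} [MetricSpace X] [MeasurableSpace X]
    [OpensMeasurableSpace X] (μ : Measure X) [IsFiniteMeasure μ] [μ.InnerRegularCompactLTTop]
    {K : NNReal} {F : Set (X → ℝ)} (hF : ∀ f ∈ F, LipschitzWith K f) {f : X → ℝ}
    (hf : f ∈ closure F) {ε : ℝ} (hε : 0 < ε) :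
    ∃ f' ∈ F, kyFan μ f f' ≤ ENNReal.ofReal ε := by
  set r := ε / (2 * K + 1)
  have hr : 0 < r := by positivity
  obtain ⟨C, -, hC, hμC⟩ := MeasurableSet.univ.exists_isCompact_sdiff_lt (measure_ne_top μ univ)
    (ENNReal.ofReal_pos.2 hε).ne'
  obtain ⟨t, ht, hCt⟩ := Metric.totallyBounded_iff.1 hC.totallyBounded r hr
  have hnear : ∀ᶠ h in 𝓝 f, ∀ y ∈ t, dist (h y) (f y) < r :=
    (eventually_all_finite ht).2 fun y _ =>
      ((continuous_apply y).tendsto f).eventually (Metric.ball_mem_nhds (f y) hr)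
  obtain ⟨f', hf't, hf'F⟩ := (hnear.and_frequently (mem_closure_iff_frequently.1 hf)).exists
  refine ⟨f', hf'F, kyFan_le_of_measure_le μ ((measure_mono fun x hx => ?_).trans hμC.le)⟩
  refine ⟨mem_univ x, fun hxC => (mem_ofPred_eq ▸ hx).not_ge ?_⟩
  obtain ⟨y, hy, hxy⟩ := mem_iUnion₂.1 (hCt hxC)
  rw [Metric.mem_ball] at hxy
  rw [edist_dist]
  refine ENNReal.ofReal_le_ofReal ?_
  calc dist (f x) (f' x) ≤ dist (f x) (f y) + dist (f y) (f' y) + dist (f' y) (f' x) :=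
        dist_triangle4 _ _ _ _
    _ ≤ K * dist x y + r + K * dist y x := by
        gcongr
        · exact (LipschitzWith.of_mem_closure hF hf).dist_le_mul x y
        · rw [dist_comm]; exact (hf't y hy).le
        · exact (hF f' hf'F).dist_le_mul y x
    _ ≤ K * r + r + K * r := by rw [dist_comm y x]; gcongr
    _ = ε := by simp only [r]; field_simp; ring

theorem Equicontinuous.exists_subseq_tendsto {Y β : Type*} [TopologicalSpace Y]
    [TopologicalSpace.SeparableSpace Y] [PseudoMetricSpace β] [ProperSpace β] {g : ℕ → Y → β}
    (hg : Equicontinuous g) (hbdd : ∀ y, IsBounded (range fun n => g n y)) :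
    ∃ φ : ℕ → ℕ, StrictMono φ ∧ ∃ g' : Y → β, Tendsto (g ∘ φ) atTop (𝓝 g') := by
  obtain ⟨s, hs, hsd⟩ := TopologicalSpace.exists_countable_dense Y
  have := hs.to_subtype
  obtain ⟨_, -, φ, hφ, hconv⟩ := (isCompact_univ_pi fun k : s => (hbdd k).isCompact_closure)
    |>.tendsto_subseq (x := fun n (k : s) => g n k) fun n k _ => subset_closure ⟨n, rfl⟩
  have hcauchy : ∀ y, CauchySeq fun n => g (φ n) y := by
    intro y
    refine Metric.cauchySeq_iff.2 fun ε hε => ?_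
    obtain ⟨k, hks, hk⟩ := hsd.inter_nhds_nonempty
      (Metric.equicontinuousAt_iff_right.1 (hg y) (ε / 3) (by positivity))
    obtain ⟨N, hN⟩ := Metric.cauchySeq_iff.1
      (tendsto_pi_nhds.1 hconv ⟨k, hks⟩).cauchySeq (ε / 3) (by positivity)
    refine ⟨N, fun m hm n hn => ?_⟩
    calc dist (g (φ m) y) (g (φ n) y)
        ≤ dist (g (φ m) y) (g (φ m) k) + dist (g (φ m) k) (g (φ n) k)
          + dist (g (φ n) k) (g (φ n) y) := dist_triangle4 _ _ _ _
      _ < ε / 3 + ε / 3 + ε / 3 := by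
        gcongr
        · exact hk (φ m)
        · exact hN m hm n hn
        · rw [dist_comm]; exact hk (φ n)
      _ = ε := by ring
  choose g' hg' using fun y => cauchySeq_tendsto_of_complete (hcauchy y)
  exact ⟨φ, hφ, g', tendsto_pi_nhds.2 hg'⟩

/-- A Ky Fan bound `R < 1` forces each `g i` to come `R`-close to `f` somewhere in a fixed ball
of `X × Y`, which pins down the values of the `g i` everywhere. -/
theorem isBounded_range_apply_of_kyFan_le {X Y β ι : Type*} [PseudoMetricSpace X]
    [PseudoMetricSpace Y] [PseudoMetricSpace β] [MeasurableSpace X] [MeasurableSpace Y]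
    (π : Measure (X × Y)) [IsProbabilityMeasure π] {K K' : NNReal} {f : X → β}
    (hf : LipschitzWith K f) {g : ι → Y → β} (hg : ∀ i, LipschitzWith K' (g i)) {R : ℝ≥0∞}
    (hR : R < 1) (hgR : ∀ i, kyFan π (f ∘ Prod.fst) (g i ∘ Prod.snd) ≤ R) (y : Y) :
    IsBounded (range fun i => g i y) := by
  obtain ⟨ω₀⟩ := nonempty_of_isProbabilityMeasure π
  obtain ⟨N, hN⟩ : ∃ N : ℕ, R < π (Metric.ball ω₀ N) := by
    have := tendsto_measure_iUnion_atTop (μ := π)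
      fun m n (h : m ≤ n) => Metric.ball_subset_ball (Nat.cast_le.2 h) (x := ω₀)
    rw [Metric.iUnion_ball_nat, measure_univ] at this
    exact (this.eventually_const_lt hR).exists
  have hclose : ∀ i, ∃ ω ∈ Metric.ball ω₀ N, dist (f ω.1) (g i ω.2) ≤ R.toReal := fun i => by
    obtain ⟨ω, hω, hle⟩ := exists_edist_le_of_kyFan_le π (hgR i) hN
    rw [edist_dist, ENNReal.ofReal_le_iff_le_toReal (hR.trans ENNReal.one_lt_top).ne] at hle
    exact ⟨ω, hω, hle⟩
  choose ω hω hωR using hclose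
  refine (Metric.isBounded_iff_subset_closedBall (f ω₀.1)).2
    ⟨K' * (dist y ω₀.2 + N) + R.toReal + K * N, ?_⟩
  rintro _ ⟨i, rfl⟩
  have hωN : dist (ω i).1 ω₀.1 < N ∧ dist (ω i).2 ω₀.2 < N := by
    simpa only [Metric.mem_ball, Prod.dist_eq, max_lt_iff] using hω i
  rw [Metric.mem_closedBall]
  calc dist (g i y) (f ω₀.1)
      ≤ dist (g i y) (g i (ω i).2) + dist (g i (ω i).2) (f (ω i).1)
        + dist (f (ω i).1) (f ω₀.1) := dist_triangle4 _ _ _ _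
    _ ≤ K' * dist y (ω i).2 + R.toReal + K * dist (ω i).1 ω₀.1 := by
        gcongr
        · exact (hg i).dist_le_mul _ _
        · rw [dist_comm]; exact hωR i
        · exact hf.dist_le_mul _ _
    _ ≤ K' * (dist y ω₀.2 + N) + R.toReal + K * N := by
        gcongr
        · exact (dist_triangle_right _ _ ω₀.2).trans (add_le_add le_rfl hωN.2.le)
        · exact hωN.1.le

theorem GDS.lipschitzWith_of_mem_F (X : GDS) {f : X.carrier → ℝ} (hf : f ∈ X.F) :
    LipschitzWith 1 f :=
  LipschitzWith.of_dist_le_mul fun x y => by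
    rw [NNReal.coe_one, one_mul, Real.dist_eq]
    exact (X.dist_isLUB x y).1 ⟨f, hf, rfl⟩

theorem GDS.iInf_kyFan_le_dConcCoupling {X Y : GDS} {π : Measure (X.carrier × Y.carrier)}
    (hπ : X.Coupling Y π) {f : X.carrier → ℝ} (hf : f ∈ closure X.F) :
    ⨅ g ∈ Y.F, kyFan π (f ∘ Prod.fst) (g ∘ Prod.snd) ≤ dConcCoupling X Y π := by
  have hF : ∀ f' ∈ X.F,
      ⨅ g ∈ Y.F, kyFan π (f' ∘ Prod.fst) (g ∘ Prod.snd) ≤ dConcCoupling X Y π := fun f' hf' =>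
    (iInf_image (g := kyFan π (f' ∘ Prod.fst))).symm.trans_le
      (iInf_le_hausd _ _ (mem_image_of_mem (· ∘ Prod.fst) hf'))
  refine ENNReal.le_of_forall_pos_le_add fun ε hε _ => ?_
  obtain ⟨f', hf'F, hff'⟩ := exists_kyFan_le_of_mem_closure X.μ
    (fun _ => X.lipschitzWith_of_mem_F) hf (NNReal.coe_pos.2 hε)
  have hff'π : kyFan π (f ∘ Prod.fst) (f' ∘ Prod.fst) ≤ ε := by
    rw [ENNReal.ofReal_coe_nnreal, ← hπ.2.1] at hff'
    exact (kyFan_comp_le_kyFan_map π measurable_fst.aemeasurable f f').trans hff'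
  calc ⨅ g ∈ Y.F, kyFan π (f ∘ Prod.fst) (g ∘ Prod.snd)
      ≤ ⨅ g ∈ Y.F, (ε + kyFan π (f' ∘ Prod.fst) (g ∘ Prod.snd)) :=
        iInf₂_mono fun g _ => (kyFan_triangle π _ _ _).trans (add_le_add_left hff'π _)
    _ = ε + ⨅ g ∈ Y.F, kyFan π (f' ∘ Prod.fst) (g ∘ Prod.snd) := by
        simp only [ENNReal.add_iInf]
    _ ≤ dConcCoupling X Y π + ε := by
        rw [add_comm]; exact add_le_add_left (hF f' hf'F) _

/-- For a coupling `π` there is a map `u : F̄_X → F̄_Y` with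
`d_KF^π(f ∘ pr₁, u(f) ∘ pr₂) ≤ d_conc^π(X,Y)` for every `f ∈ F̄_X`. -/
theorem exists_map_kyFan_le_dConcCoupling (X Y : GDS)
    (π : Measure (X.carrier × Y.carrier)) (hπ : X.Coupling Y π) :
    ∃ u : (X.carrier → ℝ) → (Y.carrier → ℝ),
      (∀ f ∈ closure X.F, u f ∈ closure Y.F) ∧
      ∀ f ∈ closure X.F,
        kyFan π (f ∘ Prod.fst) (u f ∘ Prod.snd) ≤ dConcCoupling X Y π := by
  have := hπ.1
  suffices h : ∀ f ∈ closure X.F, ∃ g ∈ closure Y.F,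
      kyFan π (f ∘ Prod.fst) (g ∘ Prod.snd) ≤ dConcCoupling X Y π by
    choose! u hu hku using h
    exact ⟨u, hu, hku⟩
  intro f hf
  set D := dConcCoupling X Y π
  rcases le_or_gt 1 D with hD | hD
  · obtain ⟨g, hg⟩ := Y.F_nonempty
    exact ⟨g, subset_closure hg, (kyFan_le_one π _ _).trans hD⟩
  obtain ⟨t, ht_anti, htD, ht⟩ := exists_seq_strictAnti_tendsto' hD
  choose g hgF hgt using fun n => by
    simpa only [iInf_lt_iff, exists_prop] using
      (GDS.iInf_kyFan_le_dConcCoupling hπ hf).trans_lt (htD n).1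
  have hg_lip n : LipschitzWith 1 (g n) := Y.lipschitzWith_of_mem_F (hgF n)
  have hbdd := isBounded_range_apply_of_kyFan_le π
    (LipschitzWith.of_mem_closure (fun _ => X.lipschitzWith_of_mem_F) hf) hg_lip (htD 0).2
    fun n => (hgt n).le.trans (ht_anti.antitone n.zero_le)
  obtain ⟨φ, hφ, g', hg'⟩ :=
    (LipschitzWith.uniformEquicontinuous g 1 hg_lip).equicontinuous.exists_subseq_tendsto hbdd
  refine ⟨g', mem_closure_of_tendsto hg' (.of_forall fun n => hgF (φ n)), ?_⟩
  calc kyFan π (f ∘ Prod.fst) (g' ∘ Prod.snd)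
      ≤ liminf (fun n => kyFan π (f ∘ Prod.fst) (g (φ n) ∘ Prod.snd)) atTop :=
        kyFan_le_liminf_of_tendsto π fun ω => tendsto_pi_nhds.1 hg' ω.2
    _ ≤ liminf (fun n => t (φ n)) atTop := liminf_le_liminf (.of_forall fun n => (hgt _).le)
    _ = D := (ht.comp hφ.tendsto_atTop).liminf_eq
end
end

section
/- Let X and Y be geometric data sets and π ∈ Π(μ_X, μ_Y) a coupling. Then dis π = □_π(Lip₁(X), Lip₁(Y)), where Lip₁(X) and Lip₁(Y) are the sets of all 1-Lipschitz real-valued functions on (X, d_X) and (Y, d_Y) respectively. Consequently, the box distance between geometric data sets extends Gromov's box distance between mm-spaces. -/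
open MeasureTheory Topology Filter ENNReal

noncomputable section

/-!
On a set `S ⊆ X × Y`, a distortion bound `dis S ≤ 2c` lets every `1`-Lipschitz `f` on `X`
be transported to the `1`-Lipschitz function `y ↦ c + inf_{p ∈ S} (f p.1 + d(y, p.2))` on `Y`,
which stays within `c` of `f` along `S`. Conversely, if the test function `d(·, q.1)` has a
`1`-Lipschitz partner on `Y` within `c` along `S`, then `d(p.1, q.1) ≤ d(p.2, q.2) + 2c` on `S`.
Hence `dis S = 2 H_{d∞^S}(Lip₁(X) ∘ pr₁, Lip₁(Y) ∘ pr₂)` for every `S`, and the two infima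
over closed `S` agree term by term.
-/

section Hausdorff

variable {α : Type*} {d : α → α → ℝ≥0∞} {A B : Set α} {c : ℝ≥0∞}

theorem hausd_le_of_forall_exists (hA : ∀ a ∈ A, ∃ b ∈ B, d a b ≤ c)
    (hB : ∀ b ∈ B, ∃ a ∈ A, d a b ≤ c) : hausd d A B ≤ c := by
  refine max_le (iSup_le fun a => ?_) (iSup_le fun b => ?_)
  · obtain ⟨b, hb, hab⟩ := hA a a.2
    exact (iInf_le _ (⟨b, hb⟩ : B)).trans hab
  · obtain ⟨a, ha, hab⟩ := hB b b.2
    exact (iInf_le _ (⟨a, ha⟩ : A)).trans hab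

theorem exists_lt_of_hausd_lt (h : hausd d A B < c) :
    (∀ a ∈ A, ∃ b ∈ B, d a b < c) ∧ (∀ b ∈ B, ∃ a ∈ A, d a b < c) := by
  obtain ⟨hA, hB⟩ := max_lt_iff.1 h
  constructor
  · intro a ha
    obtain ⟨b, hab⟩ := iInf_lt_iff.1 ((le_iSup _ (⟨a, ha⟩ : A)).trans_lt hA)
    exact ⟨b, b.2, hab⟩
  · intro b hb
    obtain ⟨a, hab⟩ := iInf_lt_iff.1 ((le_iSup _ (⟨b, hb⟩ : B)).trans_lt hB)
    exact ⟨a, a.2, hab⟩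

end Hausdorff

theorem dInfty_le_ofReal_iff {α : Type*} {A : Set α} {u v : α → ℝ} {r : ℝ} (hr : 0 ≤ r) :
    dInfty A u v ≤ ENNReal.ofReal r ↔ ∀ a ∈ A, |u a - v a| ≤ r := by
  simp only [dInfty, iSup_le_iff, edist_dist, Real.dist_eq, ENNReal.ofReal_le_ofReal_iff hr,
    Subtype.forall]

section Distortion

variable {X Y : Type*} [PseudoMetricSpace X] [PseudoMetricSpace Y] {S : Set (X × Y)} {c : ℝ}

theorem distortion_le_ofReal_iff {r : ℝ} (hr : 0 ≤ r) :
    distortion S ≤ ENNReal.ofReal r ↔ ∀ p ∈ S, ∀ q ∈ S, |dist p.1 q.1 - dist p.2 q.2| ≤ r := by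
  simp only [distortion, iSup_le_iff, edist_dist, Real.dist_eq, ENNReal.ofReal_le_ofReal_iff hr,
    Subtype.forall]

theorem exists_lipschitzWith_one_abs_sub_le_of_dist_le
    (hS : ∀ p ∈ S, ∀ q ∈ S, dist p.1 q.1 ≤ dist p.2 q.2 + 2 * c)
    {f : X → ℝ} (hf : LipschitzWith 1 f) :
    ∃ g : Y → ℝ, LipschitzWith 1 g ∧ ∀ p ∈ S, |f p.1 - g p.2| ≤ c := by
  rcases S.eq_empty_or_nonempty with rfl | ⟨s, hs⟩
  · exact ⟨0, LipschitzWith.const' 0, by simp⟩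
  have : Nonempty S := ⟨⟨s, hs⟩⟩
  have hf' : ∀ x x', f x ≤ f x' + dist x x' := by simpa using hf.le_add_mul
  have lower : ∀ p ∈ S, ∀ q ∈ S, ∀ y, f p.1 - 2 * c - dist y p.2 ≤ f q.1 + dist y q.2 :=
    fun p hp q hq y => by
      linarith [hf' p.1 q.1, hS p hp q hq, dist_triangle_left p.2 q.2 y]
  have hbdd : ∀ y, BddBelow (Set.range fun q : S => f q.1.1 + dist y q.1.2) :=
    fun y => ⟨_, Set.forall_mem_range.2 fun q => lower s hs q q.2 y⟩
  refine ⟨fun y => (⨅ q : S, f q.1.1 + dist y q.1.2) + c, ?_, fun p hp => abs_sub_le_iff.2 ⟨?_, ?_⟩⟩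
  · refine LipschitzWith.of_le_add fun y y' => ?_
    have := le_ciInf fun q : S => sub_le_iff_le_add.2 <| calc
      ⨅ q : S, f q.1.1 + dist y q.1.2 ≤ f q.1.1 + dist y q.1.2 := ciInf_le (hbdd y) q
      _ ≤ f q.1.1 + dist y' q.1.2 + dist y y' := by linarith [dist_triangle y y' q.1.2]
    linarith
  · have := le_ciInf fun q : S => lower p hp q q.2 p.2
    rw [dist_self] at this
    linarith
  · have := ciInf_le (hbdd p.2) ⟨p, hp⟩
    rw [dist_self] at this
    linarith

theorem dist_le_add_of_forall_exists_lipschitzWith_one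
    (h : ∀ f : X → ℝ, LipschitzWith 1 f →
      ∃ g : Y → ℝ, LipschitzWith 1 g ∧ ∀ p ∈ S, |f p.1 - g p.2| ≤ c) :
    ∀ p ∈ S, ∀ q ∈ S, dist p.1 q.1 ≤ dist p.2 q.2 + 2 * c := by
  intro p hp q hq
  obtain ⟨g, hg, hfg⟩ := h (dist · q.1) (LipschitzWith.dist_left q.1)
  have hp' := abs_le.1 (hfg p hp)
  have hq' := abs_le.1 (hfg q hq)
  have hg' : g p.2 ≤ g q.2 + dist p.2 q.2 := by simpa using hg.le_add_mul p.2 q.2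
  simp only [dist_self] at hp' hq'
  linarith [hp'.2, hq'.1]

variable (S) in
def hausdLip : ℝ≥0∞ :=
  hausd (dInfty S) ((· ∘ Prod.fst) '' {f : X → ℝ | LipschitzWith 1 f})
    ((· ∘ Prod.snd) '' {g : Y → ℝ | LipschitzWith 1 g})

theorem hausdLip_le_of_distortion_le (hc : 0 ≤ c) (h : distortion S ≤ ENNReal.ofReal (2 * c)) :
    hausdLip S ≤ ENNReal.ofReal c := by
  have hS := (distortion_le_ofReal_iff (by positivity)).1 h
  refine hausd_le_of_forall_exists ?_ ?_
  · rintro _ ⟨f, hf, rfl⟩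
    have hXY : ∀ p ∈ S, ∀ q ∈ S, dist p.1 q.1 ≤ dist p.2 q.2 + 2 * c :=
      fun p hp q hq => by linarith [(abs_le.1 (hS p hp q hq)).2]
    obtain ⟨g, hg, hfg⟩ := exists_lipschitzWith_one_abs_sub_le_of_dist_le hXY hf
    exact ⟨g ∘ Prod.snd, ⟨g, hg, rfl⟩, (dInfty_le_ofReal_iff hc).2 hfg⟩
  · rintro _ ⟨g, hg, rfl⟩
    have hYX : ∀ p ∈ Prod.swap ⁻¹' S, ∀ q ∈ Prod.swap ⁻¹' S,
        dist p.1 q.1 ≤ dist p.2 q.2 + 2 * c :=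
      fun p hp q hq => by simpa using (abs_le.1 (hS _ hp _ hq)).1
    obtain ⟨f, hf, hgf⟩ := exists_lipschitzWith_one_abs_sub_le_of_dist_le hYX hg
    refine ⟨f ∘ Prod.fst, ⟨f, hf, rfl⟩, (dInfty_le_ofReal_iff hc).2 fun p hp => ?_⟩
    simpa [abs_sub_comm] using hgf p.swap hp

theorem distortion_le_of_hausdLip_le (hc : 0 ≤ c) (h : hausdLip S ≤ ENNReal.ofReal c) :
    distortion S ≤ ENNReal.ofReal (2 * c) := by
  have approx : ∀ ε > 0, ∀ p ∈ S, ∀ q ∈ S,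
      dist p.1 q.1 ≤ dist p.2 q.2 + 2 * (c + ε) ∧ dist p.2 q.2 ≤ dist p.1 q.1 + 2 * (c + ε) := by
    intro ε hε p hp q hq
    have hce : 0 ≤ c + ε := by positivity
    obtain ⟨hA, hB⟩ := exists_lt_of_hausd_lt
      (h.trans_lt ((ENNReal.ofReal_lt_ofReal_iff (by positivity)).2 (lt_add_of_pos_right c hε)))
    constructor
    · refine dist_le_add_of_forall_exists_lipschitzWith_one (fun f hf => ?_) p hp q hq
      obtain ⟨_, ⟨g, hg, rfl⟩, hfg⟩ := hA _ ⟨f, hf, rfl⟩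
      exact ⟨g, hg, (dInfty_le_ofReal_iff hce).1 hfg.le⟩
    · refine dist_le_add_of_forall_exists_lipschitzWith_one (S := Prod.swap ⁻¹' S)
        (fun g hg => ?_) p.swap hp q.swap hq
      obtain ⟨_, ⟨f, hf, rfl⟩, hfg⟩ := hB _ ⟨g, hg, rfl⟩
      refine ⟨f, hf, fun p hp => ?_⟩
      simpa [abs_sub_comm] using (dInfty_le_ofReal_iff hce).1 hfg.le p.swap hp
  refine (distortion_le_ofReal_iff (by positivity)).2 fun p hp q hq => abs_sub_le_iff.2 ⟨?_, ?_⟩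
  all_goals refine _root_.le_of_forall_pos_le_add fun ε hε => ?_
  · linarith [(approx (ε / 2) (half_pos hε) p hp q hq).1]
  · linarith [(approx (ε / 2) (half_pos hε) p hp q hq).2]

theorem distortion_eq_two_mul_hausdLip : distortion S = 2 * hausdLip S := by
  apply le_antisymm
  · rcases eq_or_ne (hausdLip S) ⊤ with htop | htop
    · simp [htop]
    have := distortion_le_of_hausdLip_le ENNReal.toReal_nonneg (ENNReal.ofReal_toReal htop).ge
    rwa [ENNReal.ofReal_mul zero_le_two, ENNReal.ofReal_ofNat, ENNReal.ofReal_toReal htop] at this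
  · rcases eq_or_ne (distortion S) ⊤ with htop | htop
    · simp [htop]
    set r := (distortion S).toReal
    have hdis : distortion S = 2 * ENNReal.ofReal (r / 2) := by
      rw [← ENNReal.ofReal_ofNat 2, ← ENNReal.ofReal_mul zero_le_two, mul_div_cancel₀ _ two_ne_zero,
        ENNReal.ofReal_toReal htop]
    rw [hdis]
    gcongr
    refine hausdLip_le_of_distortion_le (by positivity) ?_
    rw [hdis, ENNReal.ofReal_mul zero_le_two, ENNReal.ofReal_ofNat]

end Distortion

theorem disCoupling_eq_boxCoupling_lip_general (X Y : GDS)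
    (π : Measure (X.carrier × Y.carrier)) :
    disCoupling X Y π = boxCoupling X Y π
      {f : X.carrier → ℝ | LipschitzWith 1 f}
      {g : Y.carrier → ℝ | LipschitzWith 1 g} := by
  simp only [disCoupling, boxCoupling, boxS, distortion_eq_two_mul_hausdLip, hausdLip]

/-- For a coupling `π` of two geometric data sets,
`dis π = □_π(Lip₁(X), Lip₁(Y))`. -/
theorem disCoupling_eq_boxCoupling_lip (X Y : GDS)
    (π : Measure (X.carrier × Y.carrier)) (hπ : X.Coupling Y π) :
    disCoupling X Y π = boxCoupling X Y π
      {f : X.carrier → ℝ | LipschitzWith 1 f}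
      {g : Y.carrier → ℝ | LipschitzWith 1 g} :=
  disCoupling_eq_boxCoupling_lip_general X Y π
end
end
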